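/- arXiv:2307.08906 — 5 statements merged into one kernel-verified Lean document; each statement's English description precedes it below -/
import Mathlib

section
/- Let E₁ and E₂ be real normed vector spaces, let U₁ : E₁ → E₁ and U₂ : E₂ → E₂ be invertible bounded linear operators (with bounded inverses), and let W : E₁ → E₂ be a bounded linear operator satisfying W ∘ U₁ = U₂ ∘ W. If F ⊆ E₁ is a set such that the linear span of {U₁ᵏ x : k ∈ ℤ, x ∈ F} is dense in E₁, then the linear span of {U₂ᵏ (W x) : k ∈ ℤ, x ∈ F} is dense in the closure of the range of W. Consequently the multiplicity of the restriction of U₂ to the closure of the range of W is at most the multiplicity of U₁. -/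
/-! Intertwining passes to all integer powers, so the `U₂`-orbit of `W '' F` is the `W`-image of
the `U₁`-orbit of `F`, and its span is the image of the dense span upstairs. A continuous map
sends a dense set onto a dense subset of its range. -/

theorem ContinuousLinearEquiv.zpow_apply_of_intertwine
    {R M₁ M₂ : Type*} [Semiring R] [TopologicalSpace M₁] [AddCommMonoid M₁] [Module R M₁]
    [TopologicalSpace M₂] [AddCommMonoid M₂] [Module R M₂]
    {U₁ : M₁ ≃L[R] M₁} {U₂ : M₂ ≃L[R] M₂} {W : M₁ →L[R] M₂}
    (hW : ∀ x, W (U₁ x) = U₂ (W x)) (k : ℤ) (x : M₁) :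
    W ((U₁ ^ k) x) = (U₂ ^ k) (W x) := by
  have hW_symm : ∀ x, W (U₁.symm x) = U₂.symm (W x) := fun x => by
    rw [U₂.eq_symm_apply, ← hW, U₁.apply_symm_apply]
  induction k using Int.induction_on generalizing x with
  | zero => rfl
  | succ n ih =>
    rw [zpow_add_one, zpow_add_one]
    exact (ih (U₁ x)).trans (congrArg (U₂ ^ (n : ℤ)) (hW x))
  | pred n ih =>
    rw [zpow_sub_one, zpow_sub_one]
    exact (ih (U₁.symm x)).trans (congrArg (U₂ ^ (-(n : ℤ))) (hW_symm x))

/-- Let `U₁`, `U₂` be invertible bounded linear operators (with bounded inverses) on real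
normed spaces `E₁`, `E₂`, and let `W : E₁ → E₂` be a bounded linear operator intertwining
them: `W ∘ U₁ = U₂ ∘ W`.  If `F ⊆ E₁` is such that the linear span of
`{U₁ᵏ x : k ∈ ℤ, x ∈ F}` is dense in `E₁`, then the linear span of
`{U₂ᵏ (W x) : k ∈ ℤ, x ∈ F}` is dense in the closure of the range of `W`, i.e. its closure
equals the closure of the range of `W`. -/
theorem span_orbit_image_dense_in_closure_range
    {E₁ E₂ : Type*} [NormedAddCommGroup E₁] [NormedSpace ℝ E₁]
    [NormedAddCommGroup E₂] [NormedSpace ℝ E₂]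
    (U₁ : E₁ ≃L[ℝ] E₁) (U₂ : E₂ ≃L[ℝ] E₂) (W : E₁ →L[ℝ] E₂)
    (hW : ∀ x : E₁, W (U₁ x) = U₂ (W x))
    (F : Set E₁)
    (hF : Dense (Submodule.span ℝ {y : E₁ | ∃ k : ℤ, ∃ x ∈ F, y = (U₁ ^ k) x} : Set E₁)) :
    closure (Submodule.span ℝ {y : E₂ | ∃ k : ℤ, ∃ x ∈ F, y = (U₂ ^ k) (W x)} : Set E₂)
      = closure (Set.range W) := by
  have orbit_image : {y : E₂ | ∃ k : ℤ, ∃ x ∈ F, y = (U₂ ^ k) (W x)}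
      = W '' {y : E₁ | ∃ k : ℤ, ∃ x ∈ F, y = (U₁ ^ k) x} := by
    ext y
    simp [ContinuousLinearEquiv.zpow_apply_of_intertwine hW, eq_comm]
  rw [orbit_image, ← W.coe_coe, Submodule.span_image, Submodule.map_coe, W.coe_coe,
    ← closure_image_closure W.continuous, hF.closure_eq, Set.image_univ]
end

section
/- Let (X,T) be a topological dynamical system. If F ⊆ C(X) is a finite set such that the linear span of {f ∘ Tⁿ : f ∈ F, n ∈ ℤ} is dense in C(X), then the number of ergodic T-invariant Borel probability measures on X is at most the cardinality of F. In other words, the number of ergodic measures of (X,T) is at most Mult(T). -/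
/-! Integration against a `T`-invariant measure is a continuous functional on `C(X)` that is
unchanged by composition with `T`; by density of the span of the `f ∘ Tⁿ` it is determined by its
values on `F`. So `μ ↦ (∫ f dμ)_{f ∈ F}` loses no linear information on invariant measures.
Distinct ergodic measures are mutually singular, hence their integration functionals are linearly
independent, and so are their images in `ℝ^F`, which has dimension `#F`. -/

open MeasureTheory

/-- Iterates of a homeomorphism, indexed by natural numbers. -/
def hiterN {X : Type*} [TopologicalSpace X] (T : X ≃ₜ X) : ℕ → (X ≃ₜ X)
  | 0 => Homeomorph.refl X
  | n + 1 => (hiterN T n).trans T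

/-- Iterates of a homeomorphism, indexed by integers. -/
def hiter {X : Type*} [TopologicalSpace X] (T : X ≃ₜ X) : ℤ → (X ≃ₜ X)
  | Int.ofNat n => hiterN T n
  | Int.negSucc n => (hiterN T (n + 1)).symm

/-- The set of all iterates `f ∘ Tⁿ` for `f ∈ F` and `n ∈ ℤ`. -/
def iterSet {X : Type*} [TopologicalSpace X] (T : X ≃ₜ X) (F : Set C(X, ℝ)) :
    Set C(X, ℝ) :=
  {h | ∃ f ∈ F, ∃ n : ℤ, h = f.comp (hiter T n : C(X, X))}

open scoped NNReal

theorem Ergodic.mutuallySingular_of_ne {X : Type*} [MeasurableSpace X] {f : X → X}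
    {μ ν : Measure X} [IsProbabilityMeasure μ] [IsProbabilityMeasure ν] (hμ : Ergodic f μ)
    (hν : Ergodic f ν) (hne : μ ≠ ν) : μ ⟂ₘ ν := by
  -- The part of `μ` absolutely continuous w.r.t. `ν` is invariant and below `μ`,
  -- hence a multiple of `μ` by ergodicity.
  set a := ν.withDensity (μ.rnDeriv ν)
  have hle : a ≤ μ := Measure.withDensity_rnDeriv_le μ ν
  have : IsFiniteMeasure a := isFiniteMeasure_of_le μ hle
  obtain ⟨c, hc⟩ := hμ.eq_smul_of_absolutelyContinuous
    (hμ.toMeasurePreserving.withDensity_rnDeriv hν.toMeasurePreserving) hle.absolutelyContinuous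
  rcases eq_or_ne c 0 with rfl | hc₀
  · rwa [zero_smul, Measure.withDensity_rnDeriv_eq_zero] at hc
  · have haν : c • μ ≪ ν := hc ▸ withDensity_absolutelyContinuous _ _
    exact absurd (hν.eq_of_absolutelyContinuous hμ.toMeasurePreserving
      ((Measure.absolutelyContinuous_smul hc₀).trans haν)) hne

theorem MeasureTheory.Measure.coeff_eq_of_sum_smul_eq_of_mutuallySingular {X ι : Type*} [MeasurableSpace X]
    {μ : ι → Measure X} [∀ i, IsProbabilityMeasure (μ i)]
    (hμ : Pairwise fun i j => μ i ⟂ₘ μ j) {s : Finset ι} {a b : ι → ℝ≥0}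
    (h : ∑ i ∈ s, a i • μ i = ∑ i ∈ s, b i • μ i) {i : ι} (hi : i ∈ s) : a i = b i := by
  classical
  have hsing (c : ι → ℝ≥0) : μ i ⟂ₘ ∑ j ∈ s.erase i, c j • μ j :=
    Finset.sum_induction _ (μ i ⟂ₘ ·) (fun _ _ => .add_right) .zero_right
      fun j hj => ((hμ (Finset.ne_of_mem_erase hj).symm).symm.smul_nnreal _).symm
  have hab := (hsing a).add_right (hsing b)
  have hS : μ i hab.nullSetᶜ = 1 :=
    (prob_compl_eq_one_iff hab.measurableSet_nullSet).2 hab.measure_nullSet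
  have hrest := hab.measure_compl_nullSet
  rw [Measure.add_apply, add_eq_zero] at hrest
  rw [← Finset.add_sum_erase s _ hi, ← Finset.add_sum_erase s _ hi] at h
  simpa [Measure.add_apply, hS, hrest.1, hrest.2] using congrArg (· hab.nullSetᶜ) h

namespace ContinuousMap

variable {X : Type*} [TopologicalSpace X] [CompactSpace X] [MeasurableSpace X] [BorelSpace X]

noncomputable def integralCLM (μ : Measure X) [IsFiniteMeasure μ] : C(X, ℝ) →L[ℝ] ℝ :=
  L1.integralCLM.comp (toLp 1 μ ℝ)

theorem integralCLM_apply (μ : Measure X) [IsFiniteMeasure μ] (f : C(X, ℝ)) :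
    integralCLM μ f = ∫ x, f x ∂μ := by
  rw [integralCLM, ContinuousLinearMap.comp_apply, ← L1.integral_eq, L1.integral_eq_integral]
  exact integral_congr_ae (coeFn_toLp μ f)

theorem integralCLM_comp {T : X ≃ₜ X} {μ : Measure X} [IsFiniteMeasure μ]
    (hT : MeasurePreserving T μ μ) (f : C(X, ℝ)) :
    integralCLM μ (f.comp T) = integralCLM μ f := by
  simpa [integralCLM_apply] using hT.integral_comp T.measurableEmbedding f

/-- Splitting the coefficients into positive and negative parts turns a vanishing combination of
integrals into an equality of two measures, which is then evaluated on disjoint supports. -/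
theorem linearIndependent_integralCLM [HasOuterApproxClosed X] {ι : Type*}
    {μ : ι → Measure X} [∀ i, IsProbabilityMeasure (μ i)]
    (hμ : Pairwise fun i j => μ i ⟂ₘ μ j) : LinearIndependent ℝ fun i => integralCLM (μ i) := by
  rw [linearIndependent_iff']
  intro s g hg i hi
  have hsplit : ∑ j ∈ s, (g j).toNNReal • μ j = ∑ j ∈ s, (-g j).toNNReal • μ j := by
    refine ext_of_forall_integral_eq_of_IsFiniteMeasure fun f => ?_
    have hf : ∑ j ∈ s, g j * ∫ x, f x ∂μ j = 0 := by
      simpa [integralCLM_apply] using congrArg (· f.toContinuousMap) hg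
    rw [integral_finsetSum_measure fun j _ => f.integrable _,
      integral_finsetSum_measure fun j _ => f.integrable _, ← sub_eq_zero,
      ← Finset.sum_sub_distrib, ← hf]
    refine Finset.sum_congr rfl fun j _ => ?_
    rw [integral_smul_nnreal_measure, integral_smul_nnreal_measure, NNReal.smul_def,
      NNReal.smul_def, ← sub_smul, smul_eq_mul, Real.coe_toNNReal', Real.coe_toNNReal',
      max_zero_sub_eq_self]
  have hgi := Measure.coeff_eq_of_sum_smul_eq_of_mutuallySingular hμ hsplit hi
  rcases le_total (g i) 0 with h | h
  · rw [Real.toNNReal_of_nonpos h, eq_comm, Real.toNNReal_eq_zero] at hgi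
    linarith
  · rw [Real.toNNReal_of_nonpos (neg_nonpos.2 h), Real.toNNReal_eq_zero] at hgi
    linarith

end ContinuousMap

section Iterates

variable {X Y β : Type*} [TopologicalSpace X] [TopologicalSpace Y]

theorem apply_comp_hiterN {T : X ≃ₜ X} {Φ : C(X, Y) → β} (hΦ : ∀ f, Φ (f.comp T) = Φ f)
    (f : C(X, Y)) (n : ℕ) : Φ (f.comp (hiterN T n : C(X, X))) = Φ f := by
  induction n generalizing f with
  | zero => rfl
  | succ n ih => exact (ih (f.comp T)).trans (hΦ f)

theorem apply_comp_hiter {T : X ≃ₜ X} {Φ : C(X, Y) → β} (hΦ : ∀ f, Φ (f.comp T) = Φ f)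
    (f : C(X, Y)) : ∀ n : ℤ, Φ (f.comp (hiter T n : C(X, X))) = Φ f
  | Int.ofNat n => apply_comp_hiterN hΦ f n
  | Int.negSucc n => by
    set h := hiterN T (n + 1)
    show Φ (f.comp (h.symm : C(X, X))) = Φ f
    have hf : (f.comp (h.symm : C(X, X))).comp (h : C(X, X)) = f := by ext; simp
    exact (apply_comp_hiterN hΦ _ (n + 1)).symm.trans (congrArg Φ hf)

theorem ContinuousLinearMap.eq_zero_of_comp_invariant {M : Type*} [TopologicalSpace M]
    [AddCommGroup M] [Module ℝ M] [T2Space M] {T : X ≃ₜ X} {F : Set C(X, ℝ)}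
    (hF : Dense (Submodule.span ℝ (iterSet T F) : Set C(X, ℝ))) {L : C(X, ℝ) →L[ℝ] M}
    (hL : ∀ f, L (f.comp T) = L f) (hLF : ∀ f ∈ F, L f = 0) : L = 0 :=
  L.ext_on hF fun _ ⟨f, hf, n, hfn⟩ => hfn ▸ (apply_comp_hiter hL f n).trans (hLF f hf)

end Iterates

theorem linearIndependent_integral_of_dense_span {X : Type*} [TopologicalSpace X]
    [CompactSpace X] [MeasurableSpace X] [BorelSpace X] {T : X ≃ₜ X} {F : Set C(X, ℝ)}
    (hF : Dense (Submodule.span ℝ (iterSet T F) : Set C(X, ℝ))) {ι : Type*}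
    {μ : ι → Measure X} [∀ i, IsFiniteMeasure (μ i)] (hT : ∀ i, MeasurePreserving T (μ i) (μ i))
    (hμ : LinearIndependent ℝ fun i => ContinuousMap.integralCLM (μ i)) :
    LinearIndependent ℝ fun i (f : F) => ∫ x, (f : C(X, ℝ)) x ∂μ i := by
  rw [linearIndependent_iff'] at hμ ⊢
  refine fun s g hg => hμ s g (ContinuousLinearMap.eq_zero_of_comp_invariant hF (fun f => ?_)
    fun f hf => ?_)
  · simp [ContinuousMap.integralCLM_comp (hT _)]
  · simpa [ContinuousMap.integralCLM_apply] using congrFun hg ⟨f, hf⟩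

/-- If `F` is a finite generating family for a topological dynamical system `(X, T)`
(the linear span of `{f ∘ Tⁿ : f ∈ F, n ∈ ℤ}` is dense in `C(X)`), then the number of
ergodic `T`-invariant Borel probability measures on `X` is at most the cardinality of `F`. -/
theorem card_ergodic_le_card_generating_family
    {X : Type*} [MetricSpace X] [CompactSpace X] [MeasurableSpace X] [BorelSpace X]
    (T : X ≃ₜ X) (F : Finset C(X, ℝ))
    (hF : Dense (Submodule.span ℝ (iterSet T (F : Set C(X, ℝ))) : Set C(X, ℝ))) :
    {μ : Measure X | IsProbabilityMeasure μ ∧ Ergodic (⇑T) μ}.encard ≤ (F.card : ℕ∞) := by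
  set E := {μ : Measure X | IsProbabilityMeasure μ ∧ Ergodic (⇑T) μ}
  have (μ : E) : IsProbabilityMeasure (μ : Measure X) := μ.2.1
  have hE : LinearIndepOn ℝ (fun μ (f : (F : Set C(X, ℝ))) => ∫ x, (f : C(X, ℝ)) x ∂μ) E :=
    linearIndependent_integral_of_dense_span hF (fun μ => μ.2.2.toMeasurePreserving) <|
      ContinuousMap.linearIndependent_integralCLM fun μ ν hne =>
        μ.2.2.mutuallySingular_of_ne ν.2.2 (Subtype.coe_injective.ne hne)
  calc E.encard ≤ (Module.rank ℝ (↥(F : Set C(X, ℝ)) → ℝ)).toENat := hE.encard_le_toENat_rank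
    _ = F.card := by simp
end

section
/- Let (X,T) be a topological dynamical system having only finitely many ergodic T-invariant Borel probability measures. Let F ⊆ C(X) be a finite set such that the closed linear span of {f ∘ Tⁿ : f ∈ F, n ∈ ℤ} ∪ B_T(X) equals C(X). Then the constant function 1 belongs to the closed linear span of {f ∘ Tⁿ : f ∈ F, n ∈ ℤ}. -/
open MeasureTheory

/-- The set `B_T(X) = {φ ∘ T - φ : φ ∈ C(X)}` of continuous `T`-coboundaries. -/
def cobSet {X : Type*} [TopologicalSpace X] (T : X ≃ₜ X) : Set C(X, ℝ) :=
  {g | ∃ φ : C(X, ℝ), g = φ.comp (T : C(X, X)) - φ}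

/-!
If `1` is within `ε` of `s + (φ ∘ T - φ)` with `s` in the span `S` of the iterates, apply the
Cesàro average `Aₙ = (1/n) ∑_{k<n} (· ∘ Tᵏ)`. It fixes `1`, maps the `T`-invariant space `S` into
itself, does not increase distances, and sends the coboundary to `(φ ∘ Tⁿ - φ) / n`, of norm at
most `2‖φ‖ / n`. So for large `n` the element `Aₙ s` of `S` is within `2ε` of `1`.
-/

open Filter Topology

section Birkhoff

variable (R : Type*) {M : Type*} [DivisionSemiring R] [AddCommGroup M] [Module R M]

theorem birkhoffAverage_id_map_sub {F : Type*} [FunLike F M M] [AddMonoidHomClass F M M]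
    (f : F) (n : ℕ) (x y : M) :
    birkhoffAverage R f id n (x - y) =
      birkhoffAverage R f id n x - birkhoffAverage R f id n y := by
  simp [birkhoffAverage, birkhoffSum, iterate_map_sub, Finset.sum_sub_distrib, smul_sub]

variable {R} in
theorem Submodule.birkhoffAverage_id_mem {S : Submodule R M} {f : M → M} (hf : Set.MapsTo f S S)
    {x : M} (hx : x ∈ S) (n : ℕ) : birkhoffAverage R f id n x ∈ S :=
  S.smul_mem _ <| S.sum_mem fun k _ ↦ hf.iterate k hx

end Birkhoff

section MeanErgodic

variable {𝕜 E : Type*} [RCLike 𝕜] [NormedAddCommGroup E] [NormedSpace 𝕜 E]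

variable (𝕜) in
theorem dist_birkhoffAverage_id_le {f : E → E} (hf : LipschitzWith 1 f) (n : ℕ) (x y : E) :
    dist (birkhoffAverage 𝕜 f id n x) (birkhoffAverage 𝕜 f id n y) ≤ dist x y := by
  calc dist (birkhoffAverage 𝕜 f id n x) (birkhoffAverage 𝕜 f id n y)
      ≤ (∑ k ∈ Finset.range n, dist (f^[k] x) (f^[k] y)) / n :=
        dist_birkhoffAverage_birkhoffAverage_le ..
    _ ≤ (∑ _k ∈ Finset.range n, dist x y) / n := by
        gcongr
        simpa using (hf.iterate _).dist_le_mul x y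
    _ ≤ dist x y := by
        rcases eq_or_ne n 0 with rfl | hn
        · simp
        · simp [hn]

theorem LinearMap.tendsto_birkhoffAverage_id_sub_self (f : E →ₗ[𝕜] E) (hf : LipschitzWith 1 f)
    (x : E) : Tendsto (fun n ↦ birkhoffAverage 𝕜 f _root_.id n (f x - x)) atTop (𝓝 0) := by
  have hbdd : Bornology.IsBounded (Set.range fun n : ℕ ↦ _root_.id (f^[n] x)) :=
    isBounded_iff_forall_norm_le.2 ⟨‖x‖, Set.forall_mem_range.2 fun n ↦ by
      simpa [iterate_map_zero (f : E →+ E) n] using (hf.iterate n).dist_le_mul x 0⟩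
  simpa only [birkhoffAverage_id_map_sub 𝕜 f]
    using tendsto_birkhoffAverage_apply_sub_birkhoffAverage 𝕜 hbdd

theorem LinearMap.mem_closure_of_mem_closure_sup_range_sub_one (f : E →ₗ[𝕜] E)
    (hf : LipschitzWith 1 f) {S : Submodule 𝕜 E} (hS : Set.MapsTo f S S) {e : E} (he : f e = e)
    (h : e ∈ closure ((S ⊔ LinearMap.range (f - 1) : Submodule 𝕜 E) : Set E)) :
    e ∈ closure (S : Set E) := by
  rw [Metric.mem_closure_iff] at h ⊢
  intro ε hε
  obtain ⟨_, hx, hex⟩ := h (ε / 2) (half_pos hε)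
  obtain ⟨s, hs, _, ⟨φ, rfl⟩, rfl⟩ := Submodule.mem_sup.1 hx
  obtain ⟨n, hn, hn0⟩ := ((f.tendsto_birkhoffAverage_id_sub_self hf φ).eventually
    (Metric.ball_mem_nhds 0 (half_pos hε))).and (eventually_ne_atTop 0) |>.exists
  set A := birkhoffAverage 𝕜 f _root_.id n
  have hAe : A e = e := Function.IsFixedPt.birkhoffAverage_eq 𝕜 he _ (Nat.cast_ne_zero.2 hn0)
  have hcob : dist (A (s + (f - 1) φ)) (A s) < ε / 2 := by
    rwa [dist_eq_norm, ← birkhoffAverage_id_map_sub, add_sub_cancel_left, ← dist_zero_right]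
  refine ⟨A s, S.birkhoffAverage_id_mem hS hs n, ?_⟩
  calc dist e (A s) = dist (A e) (A s) := by rw [hAe]
    _ ≤ dist (A e) (A (s + (f - 1) φ)) + dist (A (s + (f - 1) φ)) (A s) := dist_triangle ..
    _ < ε / 2 + ε / 2 := add_lt_add ((dist_birkhoffAverage_id_le 𝕜 hf n _ _).trans_lt hex) hcob
    _ = ε := add_halves ε

end MeanErgodic

theorem ContinuousMap.lipschitzWith_compRightAlgHom (R : Type*) {α β A : Type*}
    [CommSemiring R] [NormedRing A] [Algebra R A] [TopologicalSpace α] [CompactSpace α]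
    [TopologicalSpace β] [CompactSpace β] (f : C(α, β)) :
    LipschitzWith 1 (compRightAlgHom R A f) :=
  LipschitzWith.of_dist_le_mul fun g h ↦ by
    simpa using (ContinuousMap.dist_le dist_nonneg).2 fun x ↦ dist_apply_le_dist (f x)

section Iterates

variable {X : Type*} [TopologicalSpace X]

theorem hiterN_eq_pow (T : X ≃ₜ X) (n : ℕ) : hiterN T n = T ^ n := by
  induction n with
  | zero => rfl
  | succ n ih => rw [pow_succ', ← ih]; rfl

theorem hiter_eq_zpow (T : X ≃ₜ X) (n : ℤ) : hiter T n = T ^ n := by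
  cases n with
  | ofNat n => exact hiterN_eq_pow T n
  | negSucc n => rw [zpow_negSucc, ← hiterN_eq_pow]; rfl

theorem mapsTo_compRightAlgHom_iterSet (T : X ≃ₜ X) (F : Set C(X, ℝ)) :
    Set.MapsTo (ContinuousMap.compRightAlgHom ℝ ℝ (T : C(X, X))) (iterSet T F)
      (iterSet T F) := by
  rintro _ ⟨f, hf, n, rfl⟩
  refine ⟨f, hf, n + 1, ?_⟩
  ext x
  simp [hiter_eq_zpow, zpow_add_one]

theorem cobSet_subset_range_compRightAlgHom_sub_one (T : X ≃ₜ X) :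
    cobSet T ⊆
      LinearMap.range ((ContinuousMap.compRightAlgHom ℝ ℝ (T : C(X, X))).toLinearMap - 1) := by
  rintro _ ⟨φ, rfl⟩
  exact ⟨φ, rfl⟩

end Iterates

theorem one_mem_closure_span_iterates_general
    {X : Type*} [MetricSpace X] [CompactSpace X]
    (T : X ≃ₜ X)
    (F : Finset C(X, ℝ))
    (hF : closure (Submodule.span ℝ (iterSet T (F : Set C(X, ℝ)) ∪ cobSet T) : Set C(X, ℝ))
      = Set.univ) :
    (1 : C(X, ℝ)) ∈
      closure (Submodule.span ℝ (iterSet T (F : Set C(X, ℝ))) : Set C(X, ℝ)) := by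
  set U := ContinuousMap.compRightAlgHom ℝ ℝ (T : C(X, X))
  have hspan : Submodule.span ℝ (iterSet T F ∪ cobSet T) ≤
      Submodule.span ℝ (iterSet T F) ⊔ LinearMap.range (U.toLinearMap - 1) := by
    rw [Submodule.span_union]
    exact sup_le_sup_left
      (Submodule.span_le.2 (cobSet_subset_range_compRightAlgHom_sub_one T)) _
  exact U.toLinearMap.mem_closure_of_mem_closure_sup_range_sub_one
    (ContinuousMap.lipschitzWith_compRightAlgHom ℝ _)
    (Submodule.mapsTo_span (mapsTo_compRightAlgHom_iterSet T F)) (map_one U)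
    (closure_mono hspan (hF ▸ Set.mem_univ 1))

/-- Let `(X, T)` be a topological dynamical system with only finitely many ergodic
`T`-invariant Borel probability measures.  If `F ⊆ C(X)` is a finite set such that the
closed linear span of `{f ∘ Tⁿ : f ∈ F, n ∈ ℤ} ∪ B_T(X)` is all of `C(X)`, then the
constant function `1` belongs to the closed linear span of `{f ∘ Tⁿ : f ∈ F, n ∈ ℤ}`. -/
theorem one_mem_closure_span_iterates
    {X : Type*} [MetricSpace X] [CompactSpace X] [MeasurableSpace X] [BorelSpace X]
    (T : X ≃ₜ X)
    (hfin : {μ : Measure X | IsProbabilityMeasure μ ∧ Ergodic (⇑T) μ}.Finite)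
    (F : Finset C(X, ℝ))
    (hF : closure (Submodule.span ℝ (iterSet T (F : Set C(X, ℝ)) ∪ cobSet T) : Set C(X, ℝ))
      = Set.univ) :
    (1 : C(X, ℝ)) ∈
      closure (Submodule.span ℝ (iterSet T (F : Set C(X, ℝ))) : Set C(X, ℝ)) :=
  one_mem_closure_span_iterates_general T F hF
end

section
/- Let G be a compact metrizable abelian topological group and let g ∈ G be such that the translation τ : x ↦ x + g is a minimal homeomorphism of G (equivalently, {n·g : n ∈ ℤ} is dense in G). Then there exists f ∈ C(G) such that the linear span of {f ∘ τⁿ : n ∈ ℤ} is dense in C(G); that is, τ is topologically simple (Mult(τ) = 1). -/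
open MeasureTheory Filter TopologicalSpace

/-!
Let `μ` be the Haar probability measure of `G`, let `(φₖ)` be a sequence in the unit ball of
`C(G)` with dense span, and let `f = ∑ 2⁻ᵏ cₖ`, where `cₖ(x) = ∫ φₖ(t) φₖ(x + t) dμ(t)` is the
autocorrelation of `φₖ`. If a functional `Λ` kills every translate `f(· + n • g)`, then by density
of the orbit it kills every translate `f(· + y)`. Put `hₖ(y) = Λ(φₖ(· + y))`. Invariance of `μ`
gives `Λ(f(· - x)) = ∑ 2⁻ᵏ ∫ hₖ(t) φₖ(x + t) dμ(t)`, so `W = ∑ 2⁻ᵏ ∫ hₖ(t) φₖ(· + t) dμ(t)` is the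
zero function, and applying `Λ` to it gives `∑ 2⁻ᵏ ∫ hₖ² dμ = 0`. Hence every `hₖ` vanishes, so
`Λ φₖ = hₖ(0) = 0` for all `k`, and `Λ = 0`. Hahn–Banach turns this into density of the span of
the translates of `f`.
-/

theorem dense_span_of_forall_dual_eq_zero {E : Type*} [TopologicalSpace E] [AddCommGroup E]
    [Module ℝ E] [IsTopologicalAddGroup E] [ContinuousSMul ℝ E] [LocallyConvexSpace ℝ E]
    {s : Set E} (h : ∀ Λ : StrongDual ℝ E, (∀ x ∈ s, Λ x = 0) → Λ = 0) :
    Dense (Submodule.span ℝ s : Set E) := by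
  set S := (Submodule.span ℝ s).topologicalClosure
  refine Submodule.dense_iff_topologicalClosure_eq_top.mpr (eq_top_iff.mpr fun x _ => ?_)
  by_contra hx
  obtain ⟨Λ, u, hΛx, hΛS⟩ :=
    geometric_hahn_banach_point_closed S.convex (Submodule.span ℝ s).isClosed_topologicalClosure
      hx
  -- a functional bounded below on a subspace vanishes on it
  have hΛS_zero : ∀ y ∈ S, Λ y = 0 := by
    intro y hy
    by_contra hy0
    have := hΛS (((u - 1) / Λ y) • y) (S.smul_mem _ hy)
    rw [map_smul, smul_eq_mul, div_mul_cancel₀ _ hy0] at this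
    linarith
  have hΛ : Λ = 0 := h Λ fun y hy =>
    hΛS_zero y ((Submodule.span ℝ s).le_topologicalClosure (Submodule.subset_span hy))
  have h0 := hΛS 0 S.zero_mem
  simp only [hΛ, zero_apply] at hΛx h0
  linarith

theorem exists_seq_norm_le_one_dense_span (E : Type*) [NormedAddCommGroup E] [NormedSpace ℝ E]
    [SeparableSpace E] :
    ∃ φ : ℕ → E, (∀ k, ‖φ k‖ ≤ 1) ∧ Dense (Submodule.span ℝ (Set.range φ) : Set E) := by
  obtain ⟨ψ, hψ⟩ := exists_dense_seq E
  refine ⟨fun k => (‖ψ k‖ + 1)⁻¹ • ψ k, fun k => ?_, hψ.mono ?_⟩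
  · rw [norm_smul, norm_inv, Real.norm_of_nonneg (by positivity), inv_mul_le_iff₀ (by positivity)]
    linarith
  · rintro _ ⟨k, rfl⟩
    rw [← smul_inv_smul₀ (by positivity : ‖ψ k‖ + 1 ≠ 0) (ψ k)]
    exact Submodule.smul_mem _ _ (Submodule.subset_span ⟨k, rfl⟩)

theorem summable_geometric_two_smul_of_norm_le {E : Type*} [NormedAddCommGroup E]
    [NormedSpace ℝ E] [CompleteSpace E] {v : ℕ → E} {C : ℝ} (hv : ∀ k, ‖v k‖ ≤ C) :
    Summable fun k => (2⁻¹ : ℝ) ^ k • v k := by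
  refine (summable_geometric_two.mul_right C).of_norm_bounded fun k => ?_
  rw [norm_smul, norm_pow, norm_inv, Real.norm_two, one_div, inv_pow]
  exact mul_le_mul_of_nonneg_left (hv k) (by positivity)

theorem Continuous.integrable_of_compactSpace {X E : Type*} [TopologicalSpace X] [CompactSpace X]
    [MeasurableSpace X] [OpensMeasurableSpace X] [NormedAddCommGroup E]
    [SecondCountableTopologyEither X E] {μ : Measure X} [IsFiniteMeasure μ] {f : X → E}
    (hf : Continuous f) : Integrable f μ :=
  hf.integrable_of_hasCompactSupport (HasCompactSupport.of_compactSpace f)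

theorem ContinuousMap.eq_zero_of_integral_mul_self_eq_zero {X : Type*} [TopologicalSpace X]
    [CompactSpace X] [MeasurableSpace X] [OpensMeasurableSpace X] {μ : Measure X}
    [IsFiniteMeasure μ] [μ.IsOpenPosMeasure] {u : C(X, ℝ)} (hu : ∫ t, u t * u t ∂μ = 0) : u = 0 := by
  have hcont : Continuous fun t => u t * u t := by fun_prop
  rw [integral_eq_zero_iff_of_nonneg (fun t => mul_self_nonneg (u t))
    hcont.integrable_of_compactSpace, Continuous.ae_eq_iff_eq μ hcont continuous_zero] at hu
  ext t
  exact mul_self_eq_zero.mp (congrFun hu t)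

noncomputable section

namespace ContinuousMap

variable {G : Type*} [AddCommGroup G] [TopologicalSpace G] [IsTopologicalAddGroup G]

def translate (y : G) : C(G, ℝ) →L[ℝ] C(G, ℝ) where
  toLinearMap := (compRightAlgHom ℝ ℝ (Homeomorph.addRight y : C(G, G))).toLinearMap
  cont := compRightAlgHom_continuous ℝ ℝ _

@[simp]
theorem translate_apply (y : G) (φ : C(G, ℝ)) (x : G) : translate y φ x = φ (x + y) := rfl

theorem translate_zero (φ : C(G, ℝ)) : translate 0 φ = φ := by
  ext x; simp

theorem translate_translate (s t : G) (φ : C(G, ℝ)) :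
    translate s (translate t φ) = translate (s + t) φ := by
  ext x; simp [add_assoc]

theorem continuous_translate_apply [LocallyCompactSpace G] (φ : C(G, ℝ)) :
    Continuous fun y : G => translate y φ :=
  (curry (φ.comp ⟨fun p : G × G => p.2 + p.1, by fun_prop⟩)).continuous

section Compact

variable [CompactSpace G]

theorem norm_translate_le (y : G) (φ : C(G, ℝ)) : ‖translate y φ‖ ≤ ‖φ‖ :=
  (norm_le _ (norm_nonneg φ)).mpr fun x => φ.norm_coe_le_norm (x + y)

def matrixCoeff (Λ : StrongDual ℝ C(G, ℝ)) (φ : C(G, ℝ)) : C(G, ℝ) :=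
  ⟨fun y => Λ (translate y φ), Λ.continuous.comp (continuous_translate_apply φ)⟩

@[simp]
theorem matrixCoeff_apply (Λ : StrongDual ℝ C(G, ℝ)) (φ : C(G, ℝ)) (y : G) :
    matrixCoeff Λ φ y = Λ (translate y φ) := rfl

theorem norm_matrixCoeff_le (Λ : StrongDual ℝ C(G, ℝ)) (φ : C(G, ℝ)) :
    ‖matrixCoeff Λ φ‖ ≤ ‖Λ‖ * ‖φ‖ :=
  (norm_le _ (by positivity)).mpr fun y =>
    (Λ.le_opNorm _).trans (mul_le_mul_of_nonneg_left (norm_translate_le y φ) (norm_nonneg Λ))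

variable [MeasurableSpace G] (μ : Measure G)

def correlation (u φ : C(G, ℝ)) : C(G, ℝ) := ∫ t, u t • translate t φ ∂μ

def autocorrelationSum (φ : ℕ → C(G, ℝ)) : C(G, ℝ) :=
  ∑' k, (2⁻¹ : ℝ) ^ k • correlation μ (φ k) (φ k)

theorem norm_correlation_le [IsProbabilityMeasure μ] (u φ : C(G, ℝ)) :
    ‖correlation μ u φ‖ ≤ ‖u‖ * ‖φ‖ := by
  have := norm_integral_le_of_norm_le_const (μ := μ) (C := ‖u‖ * ‖φ‖) <|
    Eventually.of_forall fun t => (norm_smul_le (u t) (translate t φ)).trans <|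
      mul_le_mul (u.norm_coe_le_norm t) (norm_translate_le t φ) (norm_nonneg _) (norm_nonneg u)
  rw [correlation]
  simpa using this

theorem summable_correlation [IsProbabilityMeasure μ] {u φ : ℕ → C(G, ℝ)} {C : ℝ}
    (h : ∀ k, ‖u k‖ * ‖φ k‖ ≤ C) :
    Summable fun k => (2⁻¹ : ℝ) ^ k • correlation μ (u k) (φ k) :=
  summable_geometric_two_smul_of_norm_le fun k => (norm_correlation_le μ _ _).trans (h k)

theorem summable_correlation_matrixCoeff [IsProbabilityMeasure μ] {φ : ℕ → C(G, ℝ)}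
    (hφ : ∀ k, ‖φ k‖ ≤ 1) (Λ : StrongDual ℝ C(G, ℝ)) :
    Summable fun k => (2⁻¹ : ℝ) ^ k • correlation μ (matrixCoeff Λ (φ k)) (φ k) :=
  summable_correlation μ fun k => mul_le_of_le_one_right (norm_nonneg _) (hφ k) |>.trans <|
    (norm_matrixCoeff_le Λ (φ k)).trans (mul_le_of_le_one_right (norm_nonneg Λ) (hφ k))

section Integration

variable [SecondCountableTopology G] [BorelSpace G] [IsFiniteMeasure μ]

theorem integrable_smul_translate (u φ : C(G, ℝ)) :
    Integrable (fun t => u t • translate t φ) μ :=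
  (u.continuous.smul (continuous_translate_apply φ)).integrable_of_compactSpace

theorem correlation_apply (u φ : C(G, ℝ)) (x : G) :
    correlation μ u φ x = ∫ t, u t * φ (x + t) ∂μ := by
  rw [correlation, integral_apply (integrable_smul_translate μ u φ)]
  rfl

theorem dual_correlation (Λ : StrongDual ℝ C(G, ℝ)) (u φ : C(G, ℝ)) :
    Λ (correlation μ u φ) = ∫ t, u t * matrixCoeff Λ φ t ∂μ := by
  rw [correlation, ← Λ.integral_comp_comm (integrable_smul_translate μ u φ)]
  simp

theorem dual_translate_correlation [μ.IsAddLeftInvariant] (Λ : StrongDual ℝ C(G, ℝ))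
    (u φ : C(G, ℝ)) (y : G) :
    Λ (translate y (correlation μ u φ)) = correlation μ (matrixCoeff Λ φ) u (-y) := by
  have := (Λ.comp (translate y)).integral_comp_comm (integrable_smul_translate μ u φ)
  rw [ContinuousLinearMap.comp_apply] at this
  rw [correlation_apply, ← integral_add_left_eq_self _ y, correlation, ← this]
  simp [translate_translate, mul_comm]

end Integration

section Invariant

variable [SecondCountableTopology G] [BorelSpace G] [IsProbabilityMeasure μ] [μ.IsAddLeftInvariant]

theorem tsum_correlation_matrixCoeff_eq_zero {φ : ℕ → C(G, ℝ)}
    (hφ : ∀ k, ‖φ k‖ ≤ 1) {Λ : StrongDual ℝ C(G, ℝ)}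
    (hΛ : matrixCoeff Λ (autocorrelationSum μ φ) = 0) :
    ∑' k, (2⁻¹ : ℝ) ^ k • correlation μ (matrixCoeff Λ (φ k)) (φ k) = 0 := by
  have hsum : Summable fun k => (2⁻¹ : ℝ) ^ k • correlation μ (φ k) (φ k) :=
    summable_correlation μ fun k => mul_le_one₀ (hφ k) (norm_nonneg _) (hφ k)
  ext x
  rw [← tsum_apply (summable_correlation_matrixCoeff μ hφ Λ)]
  have hx := (Λ.comp (translate (-x))).map_tsum hsum
  have h0 := congr($hΛ (-x))
  simp only [ContinuousLinearMap.comp_apply] at hx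
  rw [matrixCoeff_apply, autocorrelationSum, hx] at h0
  simpa [dual_translate_correlation] using h0

theorem dual_apply_eq_zero_of_matrixCoeff_autocorrelationSum_eq_zero [μ.IsOpenPosMeasure]
    {φ : ℕ → C(G, ℝ)} (hφ : ∀ k, ‖φ k‖ ≤ 1) {Λ : StrongDual ℝ C(G, ℝ)}
    (hΛ : matrixCoeff Λ (autocorrelationSum μ φ) = 0) (k : ℕ) : Λ (φ k) = 0 := by
  have hsq : HasSum (fun k => (2⁻¹ : ℝ) ^ k *
      ∫ t, matrixCoeff Λ (φ k) t * matrixCoeff Λ (φ k) t ∂μ) 0 := by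
    have := (summable_correlation_matrixCoeff μ hφ Λ).hasSum.mapL Λ
    rw [tsum_correlation_matrixCoeff_eq_zero μ hφ hΛ, map_zero] at this
    simpa [dual_correlation] using this
  have hk := congrFun ((hasSum_zero_iff_of_nonneg fun k => mul_nonneg (by positivity)
    (integral_nonneg fun t => mul_self_nonneg _)).mp hsq) k
  have := eq_zero_of_integral_mul_self_eq_zero ((mul_eq_zero.mp hk).resolve_left (by positivity))
  simpa [translate_zero] using congr($this 0)

end Invariant

end Compact

end ContinuousMap

end

open ContinuousMap in
/-- **Minimal translations on compact abelian groups are topologically simple.**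
Let `G` be a compact metrizable abelian topological group and `g ∈ G` be such that the
translation `τ : x ↦ x + g` is minimal, equivalently `{n • g : n ∈ ℤ}` is dense in `G`.
Then there exists `f ∈ C(G)` such that the linear span of `{f ∘ τⁿ : n ∈ ℤ}` is dense in
`C(G)`, i.e. `Mult(τ) = 1`. -/
theorem minimal_translation_topologically_simple
    {G : Type*} [AddCommGroup G] [TopologicalSpace G] [IsTopologicalAddGroup G]
    [CompactSpace G] [TopologicalSpace.MetrizableSpace G]
    (g : G) (hg : Dense (Set.range fun n : ℤ => n • g)) :
    ∃ f : C(G, ℝ),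
      Dense (Submodule.span ℝ
        {h : C(G, ℝ) | ∃ n : ℤ, ∀ x : G, h x = f (x + n • g)} : Set C(G, ℝ)) := by
  let _ : MetricSpace G := metrizableSpaceMetric G
  let _ : MeasurableSpace G := borel G
  have : BorelSpace G := ⟨rfl⟩
  let μ : Measure G := Measure.addHaarMeasure ⊤
  have : IsProbabilityMeasure μ := ⟨Measure.addHaarMeasure_self⟩
  obtain ⟨φ, hφ_norm, hφ_span⟩ := exists_seq_norm_le_one_dense_span C(G, ℝ)
  refine ⟨autocorrelationSum μ φ, dense_span_of_forall_dual_eq_zero fun Λ hΛ => ?_⟩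
  have hcoeff : matrixCoeff Λ (autocorrelationSum μ φ) = 0 :=
    ContinuousMap.ext <| congrFun <| Continuous.ext_on hg (map_continuous _) continuous_const <| by
      rintro _ ⟨n, rfl⟩
      exact hΛ _ ⟨n, fun x => rfl⟩
  exact ContinuousLinearMap.ext_on hφ_span fun _ ⟨k, hk⟩ =>
    hk ▸ dual_apply_eq_zero_of_matrixCoeff_autocorrelationSum_eq_zero μ hφ_norm hcoeff k
end

section
/- Let A be a finite alphabet, let X ⊆ A^ℤ be an aperiodic subshift, and let k be a positive integer. Suppose n is such that p_X(n+1) < (k+1)(n+1) and p_X(n+1) − p_X(n) ≤ k. Then for every m ≥ (k+2)(n+1), every word w ∈ L_m(X) contains a subword of length n belonging to Q_n, where Q_n is the set of right-special words of length n. -/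
/-- The shift by `k ∈ ℤ` on the space `ℤ → A` of bilateral sequences:
`(σᵏ x) n = x (n + k)`.  For `k = 1` this is the usual left shift `σ`. -/
def shiftZ (A : Type*) [TopologicalSpace A] (k : ℤ) : (ℤ → A) ≃ₜ (ℤ → A) where
  toFun x n := x (n + k)
  invFun x n := x (n - k)
  left_inv x := funext fun n => congrArg x (by ring)
  right_inv x := funext fun n => congrArg x (by ring)
  continuous_toFun := continuous_pi fun n => continuous_apply (n + k)
  continuous_invFun := continuous_pi fun n => continuous_apply (n - k)

/-- The words of length `n` appearing in points of `X ⊆ Aᶻ`. -/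
def langWords {A : Type*} [TopologicalSpace A] (X : Set (ℤ → A)) (n : ℕ) :
    Set (Fin n → A) :=
  {w | ∃ x ∈ X, ∃ k : ℤ, ∀ i : Fin n, x (k + i) = w i}

/-- The complexity function `p_X(n)`: the number of `n`-words of `X`. -/
noncomputable def complexity {A : Type*} [TopologicalSpace A] (X : Set (ℤ → A)) (n : ℕ) :
    ℕ :=
  (langWords X n).ncard

/-- The word `w` extended on the right by the letter `a`. -/
def wordExt {A : Type*} {n : ℕ} (w : Fin n → A) (a : A) : Fin (n + 1) → A :=
  fun j => if h : (j : ℕ) < n then w ⟨j, h⟩ else a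

/-- The set `Q_n` of right-special words of length `n` of the subshift `X`: words `w` of
`X` admitting at least two distinct extensions `wa` in the language of `X`. -/
def rightSpecial {A : Type*} [TopologicalSpace A] (X : Set (ℤ → A)) (n : ℕ) :
    Set (Fin n → A) :=
  {w | w ∈ langWords X n ∧ ∃ a b : A, a ≠ b ∧
    wordExt w a ∈ langWords X (n + 1) ∧ wordExt w b ∈ langWords X (n + 1)}

/-!
If no `n`-subword of `w` is right-special, then, since `w` has more `(n+1)`-windows than `X`
has `(n+1)`-words, two of them coincide, at distance `p` say. Each `n`-word starting between
them is not right-special, hence determines the letter following it in `x`; so the repetition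
propagates one letter at a time and `x` is `p`-periodic to the right of the first window. Shifts
of `x` by growing multiples of `p` then converge to a `p`-periodic point of `X`, contradicting
aperiodicity.
-/

@[simp]
lemma shiftZ_apply {A : Type*} [TopologicalSpace A] (k : ℤ) (x : ℤ → A) (u : ℤ) :
    shiftZ A k x u = x (u + k) :=
  rfl

def window {A : Type*} (x : ℤ → A) (n : ℕ) (s : ℤ) : Fin n → A :=
  fun j => x (s + j)

section Window

variable {A : Type*} {x : ℤ → A} {n : ℕ} {s t : ℤ}

lemma window_eq_window_iff :
    window x n s = window x n t ↔ ∀ j < n, x (s + j) = x (t + j) := by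
  simp only [window, funext_iff, Fin.forall_iff]

lemma window_succ (x : ℤ → A) (n : ℕ) (s : ℤ) :
    window x (n + 1) s = wordExt (window x n s) (x (s + n)) := by
  funext j
  simp only [window, wordExt]
  split_ifs with h
  · rfl
  · exact congrArg x (by have := j.isLt; omega)

variable [TopologicalSpace A] {X : Set (ℤ → A)}

lemma window_mem_langWords (hx : x ∈ X) (n : ℕ) (s : ℤ) : window x n s ∈ langWords X n :=
  ⟨x, hx, s, fun _ => rfl⟩

lemma next_letter_eq_of_not_mem_rightSpecial (hx : x ∈ X)
    (hs : window x n s ∉ rightSpecial X n) (h : window x n s = window x n t) :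
    x (s + n) = x (t + n) := by
  by_contra hne
  refine hs ⟨window_mem_langWords hx n s, _, _, hne, ?_, ?_⟩
  · rw [← window_succ]
    exact window_mem_langWords hx _ _
  · rw [h, ← window_succ]
    exact window_mem_langWords hx _ _

lemma exists_lt_window_eq_of_complexity_lt [Finite A] (hx : x ∈ X) (c : ℤ) {L : ℕ}
    (h : complexity X n < L) :
    ∃ a b : ℕ, a < b ∧ b < L ∧ window x n (c + b) = window x n (c + a) := by
  obtain ⟨a, ha, b, hb, hne, heq⟩ :=
    Set.exists_ne_map_eq_of_ncard_lt_of_maps_to (s := Set.Iio L) (t := langWords X n)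
      (f := fun a : ℕ => window x n (c + a)) (by rwa [Set.ncard_Iio_nat])
      (fun a _ => window_mem_langWords hx n _)
  rcases hne.lt_or_gt with hab | hab
  · exact ⟨a, b, hab, hb, heq.symm⟩
  · exact ⟨b, a, hab, ha, heq⟩

variable {p : ℕ}

lemma window_repeat_succ (hx : x ∈ X) (hp : 0 < p)
    (heq : window x (n + 1) (s + p) = window x (n + 1) s)
    (hns : ∀ r < p, window x n (s + r) ∉ rightSpecial X n) :
    window x (n + 1) (s + 1 + p) = window x (n + 1) (s + 1) ∧
      ∀ r < p, window x n (s + 1 + r) ∉ rightSpecial X n := by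
  rw [window_eq_window_iff] at heq ⊢
  have hshift : ∀ j < n, x (s + 1 + p + j) = x (s + 1 + j) := fun j hj => by
    convert heq (j + 1) (by omega) using 2 <;> push_cast <;> ring
  have hns' : ∀ r < p, window x n (s + 1 + r) ∉ rightSpecial X n := by
    intro r hr
    rcases (Nat.succ_le_of_lt hr).lt_or_eq with hlt | rfl
    · convert hns (r + 1) hlt using 3
      push_cast
      ring
    · have hrep : window x n (s + 1 + r) = window x n s := window_eq_window_iff.2 fun j hj => by
        convert heq j (by omega) using 2
        push_cast
        ring
      simpa [hrep] using hns 0 hp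
  refine ⟨fun j hj => ?_, hns'⟩
  rcases (Nat.lt_succ_iff.1 hj).lt_or_eq with hj | rfl
  · exact hshift j hj
  · have h0 := hns' 0 hp
    rw [Nat.cast_zero, add_zero] at h0
    exact (next_letter_eq_of_not_mem_rightSpecial hx h0
      (window_eq_window_iff.2 fun j hj => (hshift j hj).symm)).symm

lemma periodic_of_window_eq (hx : x ∈ X) (hp : 0 < p)
    (heq : window x (n + 1) (s + p) = window x (n + 1) s)
    (hns : ∀ r < p, window x n (s + r) ∉ rightSpecial X n) :
    Function.Periodic (fun t : ℕ => x (s + t)) p := by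
  have hrep : ∀ t : ℕ, window x (n + 1) (s + t + p) = window x (n + 1) (s + t) ∧
      ∀ r < p, window x n (s + t + r) ∉ rightSpecial X n := by
    intro t
    induction t with
    | zero => simpa using ⟨heq, hns⟩
    | succ t ih =>
      rw [Nat.cast_succ, ← add_assoc]
      exact window_repeat_succ hx hp ih.1 ih.2
  intro t
  simpa [window, add_assoc] using congrFun (hrep t).1 0

/-- The point `u ↦ x (s + u % p)` is the limit of the shifts of `x` by `s + q p`, `q → ∞`. -/
lemma exists_shift_fixed_of_periodic (hcl : IsClosed X)
    (hinv : ∀ k : ℤ, Set.MapsTo (shiftZ A k) X X) (hx : x ∈ X) (hp : 0 < p)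
    (hper : Function.Periodic (fun t : ℕ => x (s + t)) p) :
    ∃ y ∈ X, shiftZ A p y = y := by
  refine ⟨fun u => x (s + u % p), ?_, funext fun u => by simp⟩
  refine hcl.mem_of_tendsto (f := fun q : ℕ => shiftZ A (s + q * p) x) (b := Filter.atTop) ?_
    (Filter.Eventually.of_forall fun q => hinv _ hx)
  refine tendsto_pi_nhds.2 fun u => tendsto_const_nhds.congr' ?_
  filter_upwards [Filter.eventually_ge_atTop u.natAbs] with q hq
  have hnonneg : 0 ≤ u + q * p := by
    have : -u ≤ q := by omega
    nlinarith
  obtain ⟨t, ht⟩ := Int.eq_ofNat_of_zero_le hnonneg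
  have hmod : ((t % p : ℕ) : ℤ) = u % p := by
    rw [Int.natCast_mod, ← ht, Int.add_mul_emod_self_right]
  calc x (s + u % p) = x (s + (t % p : ℕ)) := by rw [hmod]
    _ = x (s + t) := hper.map_mod_nat t
    _ = shiftZ A (s + q * p) x u := by rw [shiftZ_apply, ← ht]; ring_nf

end Window

/-- **Boshernitzan's lemma.**  Let `X ⊆ Aᶻ` be an aperiodic subshift and `k ≥ 1`.
Suppose `n` satisfies `p_X(n+1) < (k+1)(n+1)` and `p_X(n+1) - p_X(n) ≤ k`.  Then for
every `m ≥ (k+2)(n+1)`, every word `w ∈ L_m(X)` contains a subword of length `n`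
belonging to `Q_n`, the set of right-special words of length `n`. -/
theorem contains_rightSpecial_subword
    {A : Type*} [Fintype A] [TopologicalSpace A]
    (X : Set (ℤ → A)) (hcl : IsClosed X)
    (hinv : ∀ k : ℤ, shiftZ A k '' X = X)
    (haper : ∀ x ∈ X, ∀ n : ℕ, 0 < n → shiftZ A n x ≠ x)
    (k : ℕ) (n : ℕ)
    (h1 : complexity X (n + 1) < (k + 1) * (n + 1)) :
    ∀ m : ℕ, (k + 2) * (n + 1) ≤ m → ∀ w ∈ langWords X m,
      ∃ i : ℕ, ∃ hi : i + n ≤ m,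
        (fun j : Fin n => w ⟨i + j, by have hj := j.2; omega⟩) ∈ rightSpecial X n := by
  rintro m hm w ⟨x, hx, c, hxw⟩
  by_contra! hcon
  have hns : ∀ i, i + n ≤ m → window x n (c + i) ∉ rightSpecial X n := fun i hi => by
    convert hcon i hi using 2
    funext j
    rw [← hxw ⟨i + j, by omega⟩]
    exact congrArg x (by push_cast; ring)
  have hL : complexity X (n + 1) < m - n := by
    have : (k + 2) * (n + 1) = (k + 1) * (n + 1) + (n + 1) := by ring
    omega
  obtain ⟨a, b, hab, hb, heq⟩ := exists_lt_window_eq_of_complexity_lt hx c hL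
  have hp : 0 < b - a := by omega
  have hper := periodic_of_window_eq hx hp (s := c + a)
    (by convert heq using 2; push_cast [hab.le]; ring)
    (fun r hr => by simpa [add_assoc] using hns (a + r) (by omega))
  obtain ⟨y, hy, hfix⟩ := exists_shift_fixed_of_periodic hcl
    (fun k x hx => hinv k ▸ Set.mem_image_of_mem _ hx) hx hp hper
  exact haper y hy _ hp hfix
end
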